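/- arXiv:1506.03530 — 3 statements merged into one kernel-verified Lean document; each statement's English description precedes it below -/
import Mathlib

section
/- If k = 5m+1 and m ≥ 2q+1 with q ≥ 1, then va₃≡(K_{4k+1,4k+1,4k+1}) ≤ 12m − 3q; and if m ≥ 2q with q ≥ 0, then va₃≡(K_{4k+1,4k+1,4k+1}) ≤ 12m − 3q + 3. -/
open SimpleGraph

/-- `G` has an equitable `(t,k)`-tree-coloring: a map `f : V → Fin t` whose color
classes have sizes differing by at most 1, and each color class induces a forest
(each component a tree) of maximum degree at most `k`. -/
def EqTreeColorable {V : Type} [Fintype V] (G : SimpleGraph V) (t k : ℕ) : Prop :=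
  ∃ f : V → Fin t,
    (∀ i j : Fin t, ({v | f v = i} : Set V).ncard ≤ ({v | f v = j} : Set V).ncard + 1) ∧
    (∀ i : Fin t, (G.induce {v | f v = i}).IsAcyclic) ∧
    (∀ i : Fin t, ∀ v, ((G.induce {v | f v = i}).neighborSet v).ncard ≤ k)

/-- The strong equitable vertex `k`-arboricity: the least `t` such that `G` has an
equitable `(t',k)`-tree-coloring for every `t' ≥ t`. -/
noncomputable def vaStrong {V : Type} [Fintype V] (G : SimpleGraph V) (k : ℕ) : ℕ :=
  sInf {t | ∀ t', t ≤ t' → EqTreeColorable G t' k}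

/-- The complete tripartite graph `K_{n,n,n}`. -/
def K3 (n : ℕ) : SimpleGraph (Σ _ : Fin 3, Fin n) :=
  completeMultipartiteGraph (fun _ => Fin n)

namespace Aux

lemma star_acyclic {V : Type*} {G : SimpleGraph V} (p₀ : V)
    (h : ∀ u v, G.Adj u v → u = p₀ ∨ v = p₀) : G.IsAcyclic := by
  intro v c hc
  have hlen := hc.three_le_length
  have hnodup : c.support.tail.Nodup := hc.support_nodup
  cases c with
  | nil => simp at hlen
  | cons h1 w1 =>
    cases w1 with
    | nil => simp at hlen
    | cons h2 w2 =>
      cases w2 with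
      | nil => simp at hlen
      | cons h3 w3 =>
        rename_i b d e
        simp [Walk.support_cons] at hnodup
        obtain ⟨⟨hbd, hbw⟩, hdw, -⟩ := hnodup
        have hbe : b ≠ e := fun he => hbw (he ▸ w3.start_mem_support)
        have hbv : b ≠ v := fun he => hbw (he ▸ w3.end_mem_support)
        have hdv : d ≠ v := fun he => hdw (he ▸ w3.end_mem_support)
        rcases h _ _ h1 with hv | hb
        · rcases h _ _ h2 with hb | hd
          · exact hbv (hb.trans hv.symm)
          · exact hdv (hd.trans hv.symm)
        · rcases h _ _ h3 with hd | he
          · exact hbd (hb.trans hd.symm)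
          · exact hbe (hb.trans he.symm)

lemma acyclic_of_no_adj {V : Type*} {G : SimpleGraph V} (h : ∀ u v, ¬ G.Adj u v) :
    G.IsAcyclic := by
  intro v c hc
  have hlen := hc.three_le_length
  cases c with
  | nil => simp at hlen
  | cons h1 w1 => exact h _ _ h1

def pos (n : ℕ) (v : Σ _ : Fin 3, Fin n) : ℕ := n * v.1.val + v.2.val

lemma pos_lt (n : ℕ) (v : Σ _ : Fin 3, Fin n) : pos n v < 3 * n := by
  have h1 : v.1.val < 3 := v.1.isLt
  have h2 : v.2.val < n := v.2.isLt
  unfold pos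
  interval_cases h : v.1.val <;> omega

lemma pos_inj (n : ℕ) : Function.Injective (pos n) := by
  rintro ⟨⟨i, hi⟩, ⟨x, hx⟩⟩ ⟨⟨j, hj⟩, ⟨y, hy⟩⟩ h
  simp only [pos] at h
  have : i = j ∧ x = y := by
    interval_cases i <;> interval_cases j <;> omega
  obtain ⟨rfl, rfl⟩ := this
  rfl

lemma pos_surj (n : ℕ) (hn : 0 < n) (p : ℕ) (hp : p < 3 * n) :
    ∃ v : Σ _ : Fin 3, Fin n, pos n v = p := by
  refine ⟨⟨⟨p / n, ?_⟩, ⟨p % n, Nat.mod_lt _ hn⟩⟩, ?_⟩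
  · exact Nat.div_lt_of_lt_mul (by omega)
  · exact Nat.div_add_mod p n

lemma same_part {n : ℕ} (hn : 0 < n) (j : ℕ) (u w : Σ _ : Fin 3, Fin n)
    (hu1 : j * n ≤ pos n u) (hu2 : pos n u < (j + 1) * n)
    (hw1 : j * n ≤ pos n w) (hw2 : pos n w < (j + 1) * n) : u.1 = w.1 := by
  rcases lt_or_ge j 3 with hj | hj
  · obtain ⟨⟨i, hi⟩, ⟨x, hx⟩⟩ := u
    obtain ⟨⟨i', hi'⟩, ⟨y, hy⟩⟩ := w
    simp only [pos] at hu1 hu2 hw1 hw2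
    apply Fin.ext
    simp only
    interval_cases i <;> interval_cases i' <;> interval_cases j <;> omega
  · exfalso
    have h3 : 3 * n ≤ j * n := Nat.mul_le_mul_right n hj
    have := pos_lt n u
    omega

def Safe (n a b : ℕ) : Prop :=
  (∃ i, i * n ≤ a ∧ b ≤ (i + 1) * n) ∨
  (b ≤ a + 4 ∧ (a + 1 = n ∨ a + 1 = 2 * n ∨ b = n + 1 ∨ b = 2 * n + 1))

lemma main (n t s : ℕ) (hn : 4 ≤ n) (P : ℕ → ℕ)
    (h0 : P 0 = 0) (hT : P t = 3 * n)
    (hstep : ∀ c, P c ≤ P (c + 1))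
    (hsize : ∀ c, c < t → s ≤ P (c + 1) - P c ∧ P (c + 1) - P c ≤ s + 1)
    (hsafe : ∀ c, c < t → Safe n (P c) (P (c + 1))) :
    EqTreeColorable (K3 n) t 3 := by
  classical
  have hmono : Monotone P := monotone_nat_of_le_succ hstep
  have hn0 : 0 < n := by omega
  have ht : 0 < t := by
    by_contra h
    have h' : t = 0 := by omega
    rw [h', h0] at hT; omega
  have hex : ∀ p, p < 3 * n → ∃ c, p < P (c + 1) := by
    intro p hp
    refine ⟨t - 1, ?_⟩
    have h' : t - 1 + 1 = t := by omega
    rw [h', hT]; exact hp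
  set f : (Σ _ : Fin 3, Fin n) → Fin t := fun v =>
    ⟨Nat.find (hex (pos n v) (pos_lt n v)), by
      have h1 : Nat.find (hex (pos n v) (pos_lt n v)) ≤ t - 1 := by
        apply Nat.find_min'
        have h' : t - 1 + 1 = t := by omega
        rw [h', hT]; exact pos_lt n v
      omega⟩ with hf
  have hchar : ∀ v (i : Fin t), f v = i ↔ (P i.val ≤ pos n v ∧ pos n v < P (i.val + 1)) := by
    intro v i
    constructor
    · rintro rfl
      rw [hf]
      simp only
      constructor
      · rcases Nat.eq_zero_or_pos (Nat.find (hex (pos n v) (pos_lt n v))) with h | h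
        · rw [h, h0]; omega
        · have h2 := Nat.find_min (hex (pos n v) (pos_lt n v)) (show (Nat.find (hex (pos n v) (pos_lt n v))) - 1 < Nat.find (hex (pos n v) (pos_lt n v)) by omega)
          push_neg at h2
          have h' : Nat.find (hex (pos n v) (pos_lt n v)) - 1 + 1 = Nat.find (hex (pos n v) (pos_lt n v)) := by omega
          rwa [h'] at h2
      · exact Nat.find_spec (hex (pos n v) (pos_lt n v))
    · rintro ⟨h1, h2⟩
      apply Fin.ext
      rw [hf]
      simp only
      have hle : Nat.find (hex (pos n v) (pos_lt n v)) ≤ i.val := Nat.find_min' _ h2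
      rcases eq_or_lt_of_le hle with h | h
      · exact h
      · exfalso
        have h3 : Nat.find (hex (pos n v) (pos_lt n v)) + 1 ≤ i.val := h
        have h4 := Nat.find_spec (hex (pos n v) (pos_lt n v))
        have h5 : P (Nat.find (hex (pos n v) (pos_lt n v)) + 1) ≤ P i.val := hmono h3
        omega
  have hble : ∀ i : Fin t, P (i.val + 1) ≤ 3 * n := by
    intro i
    calc P (i.val + 1) ≤ P t := hmono i.isLt
    _ = 3 * n := hT
  have hcard : ∀ i : Fin t, ({v | f v = i} : Set (Σ _ : Fin 3, Fin n)).ncard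
      = P (i.val + 1) - P i.val := by
    intro i
    have himg : pos n '' {v | f v = i} = Set.Ico (P i.val) (P (i.val + 1)) := by
      ext p
      constructor
      · rintro ⟨v, hv, rfl⟩
        exact ⟨((hchar v i).1 hv).1, ((hchar v i).1 hv).2⟩
      · intro hp
        have hp3 : p < 3 * n := lt_of_lt_of_le hp.2 (hble i)
        obtain ⟨v, rfl⟩ := pos_surj n hn0 p hp3
        exact ⟨v, (hchar v i).2 ⟨hp.1, hp.2⟩, rfl⟩
    calc ({v | f v = i} : Set (Σ _ : Fin 3, Fin n)).ncard
        = (pos n '' {v | f v = i}).ncard := (Set.ncard_image_of_injective _ (pos_inj n)).symm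
      _ = (Set.Ico (P i.val) (P (i.val + 1))).ncard := by rw [himg]
      _ = P (i.val + 1) - P i.val := by
          rw [← Finset.coe_Ico, Set.ncard_coe_finset, Nat.card_Ico]
  refine ⟨f, ?_, ?_, ?_⟩
  · intro i j
    have h1 := hcard i
    have h2 := hcard j
    have h3 := hsize i.val i.isLt
    have h4 := hsize j.val j.isLt
    omega
  · -- acyclicity
    intro i
    rcases hsafe i.val i.isLt with ⟨j, hj1, hj2⟩ | ⟨hb4, hB⟩
    · apply acyclic_of_no_adj
      rintro ⟨u, hu⟩ ⟨w, hw⟩ hadj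
      have hu' := (hchar u i).1 hu
      have hw' := (hchar w i).1 hw
      have : u.1 = w.1 := same_part hn0 j u w (le_trans hj1 hu'.1)
        (lt_of_lt_of_le hu'.2 hj2) (le_trans hj1 hw'.1) (lt_of_lt_of_le hw'.2 hj2)
      exact (by simpa [K3] using hadj : u.1 ≠ w.1) this
    · -- star case
      set a := P i.val with ha
      set b := P (i.val + 1) with hb
      rcases eq_or_lt_of_le (hstep i.val) with heq | hlt
      · apply acyclic_of_no_adj
        rintro ⟨u, hu⟩ ⟨w, hw⟩ hadj
        have hu' := (hchar u i).1 hu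
        omega
      · have hkey : ∃ c₀, a ≤ c₀ ∧ c₀ < b ∧ ∀ u w : Σ _ : Fin 3, Fin n,
            a ≤ pos n u → pos n u < b → a ≤ pos n w → pos n w < b →
            pos n u ≠ c₀ → pos n w ≠ c₀ → u.1 = w.1 := by
          rcases hB with hc | hc | hc | hc
          · refine ⟨a, le_refl _, hlt, ?_⟩
            intro u w hu1 hu2 hw1 hw2 hu3 hw3
            exact same_part hn0 1 u w (by omega) (by omega) (by omega) (by omega)
          · refine ⟨a, le_refl _, hlt, ?_⟩
            intro u w hu1 hu2 hw1 hw2 hu3 hw3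
            have := pos_lt n u; have := pos_lt n w
            exact same_part hn0 2 u w (by omega) (by omega) (by omega) (by omega)
          · refine ⟨b - 1, by omega, by omega, ?_⟩
            intro u w hu1 hu2 hw1 hw2 hu3 hw3
            exact same_part hn0 0 u w (by omega) (by omega) (by omega) (by omega)
          · refine ⟨b - 1, by omega, by omega, ?_⟩
            intro u w hu1 hu2 hw1 hw2 hu3 hw3
            exact same_part hn0 1 u w (by omega) (by omega) (by omega) (by omega)
        obtain ⟨c₀, hc1, hc2, hkey⟩ := hkey
        obtain ⟨v₀, hv₀⟩ := pos_surj n hn0 c₀ (by have := hble i; omega)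
        have hv₀mem : f v₀ = i := (hchar v₀ i).2 ⟨by omega, by omega⟩
        apply star_acyclic (p₀ := (⟨v₀, hv₀mem⟩ : {v | f v = i}))
        rintro ⟨u, hu⟩ ⟨w, hw⟩ hadj
        have hu' := (hchar u i).1 hu
        have hw' := (hchar w i).1 hw
        have hadj' : u.1 ≠ w.1 := by simpa [K3] using hadj
        by_cases hpu : pos n u = c₀
        · exact Or.inl (Subtype.ext (pos_inj n (hpu.trans hv₀.symm)))
        · by_cases hpw : pos n w = c₀
          · exact Or.inr (Subtype.ext (pos_inj n (hpw.trans hv₀.symm)))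
          · exact absurd (hkey u w hu'.1 hu'.2 hw'.1 hw'.2 hpu hpw) hadj'
  · -- degree bound
    intro i v
    rcases hsafe i.val i.isLt with ⟨j, hj1, hj2⟩ | ⟨hb4, hB⟩
    · have hempty : ((K3 n).induce {v | f v = i}).neighborSet v = ∅ := by
        rw [Set.eq_empty_iff_forall_notMem]
        rintro ⟨u, hu⟩ hmem
        have hadj : ((K3 n).induce {v | f v = i}).Adj v ⟨u, hu⟩ := hmem
        obtain ⟨w, hw⟩ := v
        have hu' := (hchar u i).1 hu
        have hw' := (hchar w i).1 hw
        have : w.1 = u.1 := same_part hn0 j w u (le_trans hj1 hw'.1)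
          (lt_of_lt_of_le hw'.2 hj2) (le_trans hj1 hu'.1) (lt_of_lt_of_le hu'.2 hj2)
        exact (by simpa [K3] using hadj : w.1 ≠ u.1) this
      rw [hempty]
      simp
    · have hvn : v ∉ ((K3 n).induce {v | f v = i}).neighborSet v :=
        fun h => ((K3 n).induce {v | f v = i}).irrefl h
      have h1 : (insert v (((K3 n).induce {v | f v = i}).neighborSet v)).ncard
          = (((K3 n).induce {v | f v = i}).neighborSet v).ncard + 1 :=
        Set.ncard_insert_of_notMem hvn (Set.toFinite _)
      have h2 : (insert v (((K3 n).induce {v | f v = i}).neighborSet v)).ncard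
          ≤ (Set.univ : Set ↥({v | f v = i} : Set (Σ _ : Fin 3, Fin n))).ncard :=
        Set.ncard_le_ncard (Set.subset_univ _) (Set.toFinite _)
      have h3 : (Set.univ : Set ↥({v | f v = i} : Set (Σ _ : Fin 3, Fin n))).ncard
          = ({v | f v = i} : Set (Σ _ : Fin 3, Fin n)).ncard := by
        rw [Set.ncard_univ, Nat.card_coe_set_eq]
      have h4 : ({v | f v = i} : Set (Σ _ : Fin 3, Fin n)).ncard ≤ 4 := by
        rw [hcard i]; omega
      omega


lemma safe_short {n a b : ℕ} (hn : 4 ≤ n) (h3 : b ≤ a + 3) (h3n : b ≤ 3 * n) :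
    Safe n a b := by
  by_cases hc1 : b ≤ n
  · exact Or.inl ⟨0, by omega, by omega⟩
  · by_cases hc2 : n ≤ a ∧ b ≤ 2 * n
    · exact Or.inl ⟨1, by omega, by omega⟩
    · by_cases hc3 : 2 * n ≤ a
      · exact Or.inl ⟨2, by omega, by omega⟩
      · exact Or.inr ⟨by omega, by omega⟩

lemma perPart (n t s : ℕ) (hn : 4 ≤ n) (g0 g1 g2 a0 a1 a2 : ℕ)
    (h0 : g0 * (s + 1) + a0 * s = n) (h1 : g1 * (s + 1) + a1 * s = n)
    (h2 : g2 * (s + 1) + a2 * s = n)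
    (ht : t = (g0 + a0) + (g1 + a1) + (g2 + a2)) :
    EqTreeColorable (K3 n) t 3 := by
  set P : ℕ → ℕ := fun c => s * c + min c g0 + min (c - (g0 + a0)) g1
    + min (c - ((g0 + a0) + (g1 + a1))) g2 with hP
  have hstep : ∀ c, P c ≤ P (c + 1) := by
    intro c
    simp only [hP]
    rw [show s * (c + 1) = s * c + s from by ring]
    generalize s * c = w
    omega
  have hmono : Monotone P := monotone_nat_of_le_succ hstep
  have eT0 : P (g0 + a0) = n := by
    have key : s * (g0 + a0) + g0 = n := by linear_combination h0
    simp only [hP]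
    generalize s * (g0 + a0) = w at key ⊢
    omega
  have eT1 : P ((g0 + a0) + (g1 + a1)) = 2 * n := by
    have key : s * ((g0 + a0) + (g1 + a1)) + g0 + g1 = 2 * n := by
      linear_combination h0 + h1
    simp only [hP]
    generalize s * ((g0 + a0) + (g1 + a1)) = w at key ⊢
    omega
  have eT2 : P t = 3 * n := by
    have key : s * t + g0 + g1 + g2 = 3 * n := by
      rw [ht]; linear_combination h0 + h1 + h2
    simp only [hP]
    generalize s * t = w at key ⊢
    omega
  have hsize : ∀ c, c < t → s ≤ P (c + 1) - P c ∧ P (c + 1) - P c ≤ s + 1 := by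
    intro c hc
    simp only [hP]
    rw [show s * (c + 1) = s * c + s from by ring]
    generalize s * c = w
    omega
  have hsafe : ∀ c, c < t → Safe n (P c) (P (c + 1)) := by
    intro c hc
    by_cases hc0 : c < g0 + a0
    · refine Or.inl ⟨0, by omega, ?_⟩
      have h' := hmono (show c + 1 ≤ g0 + a0 from by omega)
      rw [eT0] at h'
      omega
    · by_cases hc1 : c < (g0 + a0) + (g1 + a1)
      · refine Or.inl ⟨1, ?_, ?_⟩
        · have h' := hmono (show g0 + a0 ≤ c from by omega)
          rw [eT0] at h'
          omega
        · have h' := hmono (show c + 1 ≤ (g0 + a0) + (g1 + a1) from by omega)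
          rw [eT1] at h'
          omega
      · refine Or.inl ⟨2, ?_, ?_⟩
        · have h' := hmono (show (g0 + a0) + (g1 + a1) ≤ c from by omega)
          rw [eT1] at h'
          omega
        · have h' := hmono (show c + 1 ≤ t from by omega)
          rw [eT2] at h'
          omega
  exact main n t s hn P (by simp [hP]) eT2 hstep hsize hsafe


-- Regime B: s = 5, for t ≤ 12m+3 with balanced sixes feasible
lemma regimeB (m t : ℕ) (h2 : t ≤ 12 * m + 3)
    (hd : 6 * ((12 * m + 3 - t + 2) / 3) ≤ 4 * m + 1) :
    EqTreeColorable (K3 (20 * m + 5)) t 3 := by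
  set R := 12 * m + 3 - t with hR
  set d0 := (R + 2) / 3 with hd0
  set d1 := (R + 1) / 3 with hd1
  set d2 := R / 3 with hd2
  have hsum : d0 + d1 + d2 = R := by omega
  have hle1 : d1 ≤ d0 := by omega
  have hle2 : d2 ≤ d0 := by omega
  have hb : 6 * d0 ≤ 4 * m + 1 := hd
  refine perPart (20 * m + 5) t 5 (by omega) (5 * d0) (5 * d1) (5 * d2)
    (4 * m + 1 - 6 * d0) (4 * m + 1 - 6 * d1) (4 * m + 1 - 6 * d2) ?_ ?_ ?_ ?_
  · have : (5 * d0) * 6 + (4 * m + 1 - 6 * d0) * 5 = 20 * m + 5 := by omega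
    simpa using this
  · have : (5 * d1) * 6 + (4 * m + 1 - 6 * d1) * 5 = 20 * m + 5 := by omega
    simpa using this
  · have : (5 * d2) * 6 + (4 * m + 1 - 6 * d2) * 5 = 20 * m + 5 := by omega
    simpa using this
  · omega

-- Regime C: s = 4, 12m+4 ≤ t ≤ 15m+3
lemma regimeC (m t : ℕ) (h1 : 12 * m + 4 ≤ t) (h2 : t ≤ 15 * m + 3) :
    EqTreeColorable (K3 (20 * m + 5)) t 3 := by
  set C := 15 * m + 3 - t with hC
  set c0 := (C + 2) / 3 with hc0
  set c1 := (C + 1) / 3 with hc1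
  set c2 := C / 3 with hc2
  have hsum : c0 + c1 + c2 = C := by omega
  have hm0 : c0 ≤ m := by omega
  have hm1 : c1 ≤ m := by omega
  have hm2 : c2 ≤ m := by omega
  refine perPart (20 * m + 5) t 4 (by omega) (1 + 4 * c0) (1 + 4 * c1) (1 + 4 * c2)
    (5 * (m - c0)) (5 * (m - c1)) (5 * (m - c2)) ?_ ?_ ?_ ?_
  · have : (1 + 4 * c0) * 5 + (5 * (m - c0)) * 4 = 20 * m + 5 := by omega
    simpa using this
  · have : (1 + 4 * c1) * 5 + (5 * (m - c1)) * 4 = 20 * m + 5 := by omega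
    simpa using this
  · have : (1 + 4 * c2) * 5 + (5 * (m - c2)) * 4 = 20 * m + 5 := by omega
    simpa using this
  · omega

-- Regime D: s = 3, 15m+4 ≤ t ≤ 20m+5
lemma regimeD (m t : ℕ) (h1 : 15 * m + 4 ≤ t) (h2 : t ≤ 20 * m + 5) :
    EqTreeColorable (K3 (20 * m + 5)) t 3 := by
  set n := 20 * m + 5 with hn
  have hn4 : 4 ≤ n := by omega
  by_cases hcase : 50 * m + 13 ≤ 3 * t
  · -- B1: fours first, then threes
    set F := 60 * m + 15 - 3 * t with hF
    set P : ℕ → ℕ := fun c => 3 * c + min c F with hP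
    have hstep : ∀ c, P c ≤ P (c + 1) := by intro c; simp only [hP]; omega
    have hmono : Monotone P := monotone_nat_of_le_succ hstep
    have hT : P t = 3 * n := by simp only [hP]; omega
    refine main n t 3 hn4 P (by simp [hP]) hT hstep ?_ ?_
    · intro c hc; simp only [hP]; omega
    · intro c hc
      by_cases hcF : c < F
      · -- block [4c, 4c+4)
        rw [show P c = 4 * c from by simp only [hP]; omega,
            show P (c + 1) = 4 * c + 4 from by simp only [hP]; omega]
        by_cases hb1 : 4 * c + 4 ≤ n
        · exact Or.inl ⟨0, by omega, by omega⟩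
        · by_cases hb2 : n ≤ 4 * c
          · exact Or.inl ⟨1, by omega, by omega⟩
          · exact Or.inr ⟨by omega, by omega⟩
      · -- block size 3
        apply safe_short hn4 (by simp only [hP]; omega)
        have h' := hmono (show c + 1 ≤ t from by omega)
        omega
  · -- B2: x fours, T threes, then fours
    set x := 10 * m + 2 with hx
    set T := 4 * t - (60 * m + 15) with hT'
    have hT1 : 1 ≤ T := by omega
    have hxF : x + T ≤ t := by omega
    set P : ℕ → ℕ := fun c => 3 * c + min c x + (c - (x + T)) with hP
    have hstep : ∀ c, P c ≤ P (c + 1) := by intro c; simp only [hP]; omega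
    have hmono : Monotone P := monotone_nat_of_le_succ hstep
    have hT : P t = 3 * n := by simp only [hP]; omega
    refine main n t 3 hn4 P (by simp [hP]) hT hstep ?_ ?_
    · intro c hc; simp only [hP]; omega
    · intro c hc
      by_cases hc0 : c < x
      · rw [show P c = 4 * c from by simp only [hP]; omega,
            show P (c + 1) = 4 * c + 4 from by simp only [hP]; omega]
        by_cases hb1 : 4 * c + 4 ≤ n
        · exact Or.inl ⟨0, by omega, by omega⟩
        · by_cases hb2 : n ≤ 4 * c
          · exact Or.inl ⟨1, by omega, by omega⟩
          · exact Or.inr ⟨by omega, by omega⟩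
      · by_cases hc1 : c < x + T
        · apply safe_short hn4 (by simp only [hP]; omega)
          simp only [hP]
          omega
        · refine Or.inl ⟨2, ?_, ?_⟩ <;> simp only [hP] <;> omega

-- Regime E: t ≥ n + 1, all blocks of size ≤ 3
lemma regimeE (n t : ℕ) (hn : 4 ≤ n) (h1 : n + 1 ≤ t) :
    EqTreeColorable (K3 n) t 3 := by
  obtain ⟨s, hs⟩ : ∃ s, s = 3 * n / t := ⟨_, rfl⟩
  obtain ⟨r, hr⟩ : ∃ r, r = 3 * n % t := ⟨_, rfl⟩
  have ht0 : 0 < t := by omega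
  have key : t * s + r = 3 * n := by rw [hs, hr]; exact Nat.div_add_mod (3 * n) t
  have hrt : r < t := by rw [hr]; exact Nat.mod_lt _ ht0
  have hs2 : s ≤ 2 := by
    rw [hs]
    have : 3 * n / t < 3 := Nat.div_lt_of_lt_mul (by omega)
    omega
  clear hs hr
  set P : ℕ → ℕ := fun c => s * c + min c r with hP
  have hstep : ∀ c, P c ≤ P (c + 1) := by
    intro c
    simp only [hP]
    rw [show s * (c + 1) = s * c + s from by ring]
    generalize s * c = w
    omega
  have hT : P t = 3 * n := by
    simp only [hP]
    rw [mul_comm, min_eq_right hrt.le]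
    exact key
  have hble : ∀ c, c + 1 ≤ t → P (c + 1) ≤ 3 * n :=
    fun c hc => le_trans (monotone_nat_of_le_succ hstep hc) (le_of_eq hT)
  refine main n t s hn P (by simp [hP]) hT hstep ?_ ?_
  · intro c hc
    simp only [hP]
    rw [show s * (c + 1) = s * c + s from by ring]
    generalize s * c = w
    omega
  · intro c hc
    apply safe_short hn ?_ (hble c (by omega))
    simp only [hP]
    rw [show s * (c + 1) = s * c + s from by ring]
    generalize s * c = w
    omega

end Aux

theorem stmt16 (k m : ℕ) (hk : k = 5 * m + 1) :
    (∀ q : ℕ, 1 ≤ q → 2 * q + 1 ≤ m → vaStrong (K3 (4 * k + 1)) 3 ≤ 12 * m - 3 * q) ∧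
    (∀ q : ℕ, 2 * q ≤ m → vaStrong (K3 (4 * k + 1)) 3 ≤ 12 * m - 3 * q + 3) := by
  have hn : 4 * k + 1 = 20 * m + 5 := by omega
  rw [hn]
  have key : ∀ t', (∃ q : ℕ, 6 * q ≤ 4 * m + 1 ∧ 12 * m + 3 ≤ t' + 3 * q) →
      EqTreeColorable (K3 (20 * m + 5)) t' 3 := by
    rintro t' ⟨q, hq1, hq2⟩
    by_cases hA : t' ≤ 12 * m + 3
    · exact Aux.regimeB m t' hA (by omega)
    · by_cases hB : t' ≤ 15 * m + 3
      · exact Aux.regimeC m t' (by omega) hB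
      · by_cases hC : t' ≤ 20 * m + 5
        · exact Aux.regimeD m t' (by omega) hC
        · exact Aux.regimeE (20 * m + 5) t' (by omega) (by omega)
  constructor
  · intro q hq1 hq2
    apply Nat.sInf_le
    intro t' ht'
    exact key t' ⟨q + 1, by omega, by omega⟩
  · intro q hq
    apply Nat.sInf_le
    intro t' ht'
    exact key t' ⟨q, by omega, by omega⟩
end

section
/- If k ≡ 3 (mod 5), say k = 5m+3, then K_{4k+2,4k+2,4k+2} has no equitable (12m+8, 3)-tree-coloring; hence va₃≡(K_{4k+2,4k+2,4k+2}) ≥ (12k+9)/5. -/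
open SimpleGraph

/-!
With `n = 20m + 14` the graph `K_{n,n,n}` has `60m + 42 = 5(12m + 8) + 2` vertices, so in an
equitable `(12m + 8)`-colouring every class has at least five vertices and the class sizes
exceed five by two in total. A class with at least `d + 2` vertices inducing a forest of maximum
degree `d` in a complete multipartite graph lies inside one part: every vertex of the class has
another class vertex in its own part, and two class vertices in different parts would close a
4-cycle. Hence each part is a union of classes, so its size is `5r`, `5r + 1` or `5r + 2`; but
`20m + 14 ≡ 4 (mod 5)`. The set defining `vaStrong` is nonempty, since with at least half as many
colours as vertices every class has at most two vertices, so its infimum exceeds `12m + 8`.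
-/

lemma SimpleGraph.IsAcyclic.not_cycle_four {V : Type*} {G : SimpleGraph V} (hG : G.IsAcyclic)
    {a b c d : V} (hac : a ≠ c) (hbd : b ≠ d) (hab : G.Adj a b) (hbc : G.Adj b c)
    (hcd : G.Adj c d) (hda : G.Adj d a) : False :=
  hG (.cons hab (.cons hbc (.cons hcd (.cons hda .nil)))) <| by
    simp [Walk.cons_isCycle_iff, hab.ne, hbc.ne, hcd.ne, hda.ne, hab.ne', hda.ne', hac, hac.symm,
      hbd]

namespace completeMultipartiteGraph

variable {ι : Type*} {V : ι → Type*} {S : Set (Σ i, V i)}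

lemma ncard_neighborSet_induce {x : Σ i, V i} (hx : x ∈ S) :
    (((completeMultipartiteGraph V).induce S).neighborSet ⟨x, hx⟩).ncard =
      (S \ {v | v.1 = x.1}).ncard := by
  rw [← Set.ncard_image_of_injective _ Subtype.val_injective]
  congr 1
  ext v
  constructor
  · rintro ⟨y, hy, rfl⟩
    exact ⟨y.2, Ne.symm hy⟩
  · rintro ⟨hv, hne⟩
    exact ⟨⟨v, hv⟩, Ne.symm hne, rfl⟩

lemma exists_fst_eq_of_isAcyclic_induce {d : ℕ} (hcard : d + 2 ≤ S.ncard)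
    (hacyc : ((completeMultipartiteGraph V).induce S).IsAcyclic)
    (hdeg : ∀ v, (((completeMultipartiteGraph V).induce S).neighborSet v).ncard ≤ d) :
    ∃ i, ∀ v ∈ S, v.1 = i := by
  have hfin : S.Finite := Set.finite_of_ncard_pos (by omega)
  have hpart : ∀ x ∈ S, ∃ y ∈ S, y.1 = x.1 ∧ y ≠ x := by
    intro x hx
    have h := Set.ncard_inter_add_ncard_sdiff_eq_ncard S {v | v.1 = x.1} hfin
    have hdx := hdeg ⟨x, hx⟩
    rw [ncard_neighborSet_induce hx] at hdx
    obtain ⟨y, ⟨hyS, hy⟩, hyx⟩ := Set.exists_ne_of_one_lt_ncard (s := S ∩ {v | v.1 = x.1})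
      (by omega) x
    exact ⟨y, hyS, hy, hyx⟩
  obtain ⟨u, hu⟩ := Set.nonempty_of_ncard_ne_zero (s := S) (by omega)
  refine ⟨u.1, fun w hw => ?_⟩
  by_contra hwu
  obtain ⟨u', hu'S, hu', hu'u⟩ := hpart u hu
  obtain ⟨w', hw'S, hw', hw'w⟩ := hpart w hw
  refine hacyc.not_cycle_four (a := ⟨u, hu⟩) (b := ⟨w, hw⟩) (c := ⟨u', hu'S⟩)
    (d := ⟨w', hw'S⟩) (fun h => hu'u (congrArg Subtype.val h).symm)
    (fun h => hw'w (congrArg Subtype.val h).symm) ?_ ?_ ?_ ?_ <;>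
  simp only [comap_adj, top_adj, Function.Embedding.coe_subtype, hu', hw'] <;>
  tauto

end completeMultipartiteGraph

lemma le_of_mul_card_lt_sum {ι : Type*} [Fintype ι] {c : ι → ℕ}
    (hc : ∀ i j, c i ≤ c j + 1) {a : ℕ} (hsum : a * Fintype.card ι < ∑ i, c i) (i : ι) :
    a ≤ c i := by
  by_contra! hi
  have : ∑ j, c j ≤ ∑ _j : ι, a := Finset.sum_le_sum fun j _ => by have := hc j i; omega
  rw [Finset.sum_const, Finset.card_univ, smul_eq_mul] at this
  linarith

lemma Finset.sum_ncard_fiber {V ι : Type*} [Finite V] (f : V → ι) (s : Finset ι) :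
    ∑ i ∈ s, {v | f v = i}.ncard = {v | f v ∈ s}.ncard := by
  classical
  have := Fintype.ofFinite V
  simp only [Set.ncard_eq_toFinset_card', Set.toFinset_ofPred]
  rw [Finset.card_eq_sum_card_fiberwise (f := f) (t := s) fun v hv => by simpa using hv]
  refine Finset.sum_congr rfl fun i hi => congrArg _ ?_
  ext v
  simp only [Finset.mem_filter, Finset.mem_univ, true_and]
  exact ⟨fun h => ⟨h ▸ hi, h⟩, And.right⟩

lemma Sigma.ncard_fst_eq {ι : Type*} {α : ι → Type*} (i : ι) :
    {v : Σ i, α i | v.1 = i}.ncard = Nat.card (α i) := by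
  have : {v : Σ i, α i | v.1 = i} = Set.range (Sigma.mk i) := by
    ext ⟨j, x⟩
    simp only [Set.mem_ofPred_eq, Set.mem_range]
    constructor
    · rintro rfl
      exact ⟨x, rfl⟩
    · rintro ⟨y, hy⟩
      exact congrArg Sigma.fst hy.symm
  rw [this, ← Set.image_univ, Set.ncard_image_of_injective _ sigma_mk_injective, Set.ncard_univ]

lemma exists_fin_ncard_fiber_eq {V : Type*} [Fintype V] {t : ℕ} (ht : 0 < t) :
    ∃ f : V → Fin t, ∀ i : Fin t, {v | f v = i}.ncard =
      Fintype.card V / t + if (i : ℕ) < Fintype.card V % t then 1 else 0 := by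
  classical
  set e := Fintype.equivFin V
  refine ⟨fun v => ⟨e v % t, Nat.mod_lt _ ht⟩, fun i => ?_⟩
  have himage : (fun v => (e v : ℕ)) '' {v | (⟨e v % t, Nat.mod_lt _ ht⟩ : Fin t) = i} =
      ↑({n ∈ Finset.range (Fintype.card V) | n ≡ i [MOD t]}) := by
    ext n
    simp only [Set.mem_image, Set.mem_ofPred_eq, Fin.ext_iff, Finset.coe_filter,
      Finset.mem_range, Nat.ModEq, Nat.mod_eq_of_lt i.isLt]
    constructor
    · rintro ⟨v, hv, rfl⟩
      exact ⟨(e v).isLt, hv⟩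
    · rintro ⟨hn, hni⟩
      exact ⟨e.symm ⟨n, hn⟩, by simpa using hni, by simp⟩
  rw [← Nat.mod_eq_of_lt i.isLt, ← Nat.count_modEq_card _ ht, Nat.count_eq_card_filter_range,
    ← Set.ncard_coe_finset, ← himage]
  exact (Set.ncard_image_of_injective _ (Fin.val_injective.comp e.injective)).symm

lemma SimpleGraph.ncard_neighborSet_lt {W : Type*} [Finite W] (G : SimpleGraph W) (v : W) :
    (G.neighborSet v).ncard < Nat.card W :=
  Set.ncard_lt_card fun h => G.notMem_neighborSet_self (h ▸ Set.mem_univ v)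

lemma eqTreeColorable_of_card_le_two_mul {V : Type} [Fintype V] (G : SimpleGraph V) {t k : ℕ}
    (ht : 0 < t) (hk : 1 ≤ k) (hV : Fintype.card V ≤ 2 * t) : EqTreeColorable G t k := by
  obtain ⟨f, hf⟩ := exists_fin_ncard_fiber_eq (V := V) ht
  have hclass : ∀ i, {v | f v = i}.ncard ≤ 2 := by
    intro i
    have hdiv := Nat.div_add_mod (Fintype.card V) t
    have hmod := Nat.mod_lt (Fintype.card V) ht
    have hq : Fintype.card V / t ≤ 2 := Nat.div_le_of_le_mul (by omega)
    rw [hf]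
    interval_cases Fintype.card V / t <;> split_ifs <;> omega
  refine ⟨f, fun i j => ?_, fun i => ?_, fun i v => ?_⟩
  · rw [hf, hf]
    split_ifs <;> omega
  · refine IsAcyclic.of_card_le_two ?_
    rw [ENat.card_coe_set_eq, ← (Set.toFinite _).cast_ncard_eq]
    exact_mod_cast hclass i
  · have := (G.induce {v | f v = i}).ncard_neighborSet_lt v
    rw [Nat.card_coe_set_eq] at this
    have := hclass i
    omega

lemma lt_vaStrong_of_not_eqTreeColorable {V : Type} [Fintype V] {G : SimpleGraph V} {t k : ℕ}
    (hk : 1 ≤ k) (h : ¬ EqTreeColorable G t k) : t < vaStrong G k := by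
  have hne : {s | ∀ t', s ≤ t' → EqTreeColorable G t' k}.Nonempty :=
    ⟨Fintype.card V + 1, fun t' ht' =>
      eqTreeColorable_of_card_le_two_mul G (by omega) hk (by omega)⟩
  refine le_csInf hne fun s hs => ?_
  by_contra! hst
  exact h (hs t (by omega))

theorem not_eqTreeColorable_K3 (m : ℕ) :
    ¬ EqTreeColorable (K3 (20 * m + 14)) (12 * m + 8) 3 := by
  rintro ⟨f, hequit, hacyc, hdeg⟩
  set c : Fin (12 * m + 8) → ℕ := fun i => {v | f v = i}.ncard
  have htotal : ∑ i, c i = 60 * m + 42 := by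
    simp only [c, Finset.sum_ncard_fiber, Finset.mem_univ, Set.ofPred_true, Set.ncard_univ,
      Nat.card_eq_fintype_card, Fintype.card_sigma, Fintype.card_fin, Finset.sum_const,
      Finset.card_univ, smul_eq_mul]
    omega
  have hfive : ∀ i, 5 ≤ c i := le_of_mul_card_lt_sum hequit <| by
    rw [Fintype.card_fin, htotal]
    omega
  choose π hπ using fun i => completeMultipartiteGraph.exists_fst_eq_of_isAcyclic_induce
    (hfive i) (hacyc i) (hdeg i)
  set T := Finset.univ.filter (π · = 0)
  have hpart : ∑ i ∈ T, c i = 20 * m + 14 := by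
    have hT : {v | f v ∈ T} = {v | v.1 = 0} := by
      ext v
      simp [T, hπ (f v) v rfl]
    rw [Finset.sum_ncard_fiber, hT, Sigma.ncard_fst_eq, Nat.card_fin]
  have hexcess : ∑ i ∈ T, (c i - 5) ≤ 2 := calc
    _ ≤ ∑ i, (c i - 5) := Finset.sum_le_sum_of_subset (Finset.subset_univ T)
    _ = 2 := by
      rw [Finset.sum_tsub_distrib _ fun i _ => hfive i, htotal]
      simp only [Finset.sum_const, smul_eq_mul, Finset.card_univ, Fintype.card_fin]
      omega
  rw [Finset.sum_tsub_distrib _ fun i _ => hfive i, hpart, Finset.sum_const, smul_eq_mul]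
    at hexcess
  have hlow : 5 * T.card ≤ ∑ i ∈ T, c i := by
    simpa [mul_comm] using Finset.card_nsmul_le_sum T c 5 fun i _ => hfive i
  -- `5 #T ≤ 20m + 14 ≤ 5 #T + 2` is impossible modulo 5
  omega

theorem stmt17 (k m : ℕ) (hk : k = 5 * m + 3) :
    ¬ EqTreeColorable (K3 (4 * k + 2)) (12 * m + 8) 3 ∧
    (12 * k + 9) / 5 ≤ vaStrong (K3 (4 * k + 2)) 3 := by
  have hn : 4 * k + 2 = 20 * m + 14 := by omega
  have hnot : ¬ EqTreeColorable (K3 (4 * k + 2)) (12 * m + 8) 3 :=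
    hn ▸ not_eqTreeColorable_K3 m
  have hva := lt_vaStrong_of_not_eqTreeColorable (by norm_num) hnot
  exact ⟨hnot, by omega⟩
end

section
/- If k = 5m+2 and m ≥ 2q+1 with q ≥ 1, then va₃≡(K_{4k+2,4k+2,4k+2}) ≤ 12m − 3q + 3; and if m ≥ 2q with q ≥ 0, then va₃≡(K_{4k+2,4k+2,4k+2}) ≤ 12m − 3q + 6. -/
open SimpleGraph

/-! A colour class of `K_{n,n,n}` induces a forest of maximum degree at most 3 exactly when it
lies inside one part or is a star `K_{1,r}` with `r ≤ 3`. For `n = 20m + 10` and every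
`t ≥ 10m + 6` colours, one splits each part into about `t / 3` independent classes of sizes `a`
and `a + 1` for a suitable `a`; the only values of `t` where no common `a` fits the three parts
are `15m + 7`, `15m + 8` and, depending on `m mod 3`, some of `20m + 9, 20m + 10, 20m + 11`.
There one or two stars `K_{1,2}` or `K_{1,3}` absorb the remainders. Both bounds of the theorem
are at least `10m + 6`, with equality only when `3 ∣ m`. -/

theorem isAcyclic_of_forall_adj_eq_or_eq {V : Type*} (G : SimpleGraph V) (w : V)
    (h : ∀ u v, G.Adj u v → u = w ∨ v = w) : G.IsAcyclic :=
  (isAcyclic_starGraph w).anti fun u v huv => starGraph_adj.2 ⟨G.ne_of_adj huv, h u v huv⟩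

theorem Set.ncard_eq_sum_ncard_preimage_sigmaMk {ι : Type*} [Fintype ι] {α : ι → Type*}
    [∀ i, Fintype (α i)] (S : Set (Σ i, α i)) : S.ncard = ∑ i, (Sigma.mk i ⁻¹' S).ncard := by
  classical
  simp only [Set.ncard_eq_toFinset_card']
  rw [← Finset.card_sigma]
  congr 1
  ext ⟨i, a⟩
  simp

theorem Sigma.ncard_setOf_fst_eq {ι : Type*} {α : ι → Type*} (i : ι) :
    {x : Σ i, α i | x.1 = i}.ncard = Nat.card (α i) := by
  rw [← Set.ncard_range_of_injective sigma_mk_injective]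
  congr 1
  ext ⟨j, a⟩
  constructor
  · rintro rfl
    exact ⟨a, rfl⟩
  · rintro ⟨b, hb⟩
    exact congrArg Sigma.fst hb.symm

noncomputable def partSize {n : ℕ} (S : Set (Σ _ : Fin 3, Fin n)) (p : Fin 3) : ℕ :=
  (Sigma.mk p ⁻¹' S).ncard

theorem partSize_ne_zero {n : ℕ} {S : Set (Σ _ : Fin 3, Fin n)} {u : Σ _ : Fin 3, Fin n}
    (hu : u ∈ S) : partSize S u.1 ≠ 0 :=
  ((Set.ncard_pos).2 ⟨u.2, hu⟩).ne'

/-- `r p` is the number of vertices of a colour class in part `p`. In the second alternative the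
class is a star centred at its unique vertex in part `p`. -/
def IsTreeProfile (r : Fin 3 → ℕ) : Prop :=
  (∃ p, ∀ s, s ≠ p → r s = 0) ∨
    ((∃ p q, r p = 1 ∧ ∀ s, s ≠ p → s ≠ q → r s = 0) ∧ ∑ s, r s ≤ 4)

instance : DecidablePred IsTreeProfile := fun r => by
  unfold IsTreeProfile
  infer_instance

theorem isTreeProfile_single (p : Fin 3) (b : ℕ) : IsTreeProfile (Pi.single p b) :=
  Or.inl ⟨p, fun _ hs => Pi.single_eq_of_ne hs _⟩

theorem IsTreeProfile.induce_K3 {n : ℕ} {S : Set (Σ _ : Fin 3, Fin n)}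
    (hS : IsTreeProfile (partSize S)) :
    ((K3 n).induce S).IsAcyclic ∧ ∀ v, (((K3 n).induce S).neighborSet v).ncard ≤ 3 := by
  rcases hS with ⟨p, hp⟩ | ⟨⟨p, q, hp, hpq⟩, hsize⟩
  · have hin : ∀ u ∈ S, u.1 = p := fun u hu => by_contra fun h => partSize_ne_zero hu (hp _ h)
    have hadj : ∀ u v, ¬ ((K3 n).induce S).Adj u v := fun u v h =>
      h ((hin _ u.2).trans (hin _ v.2).symm)
    refine ⟨isAcyclic_bot.anti fun u v h => hadj u v h, fun v => ?_⟩
    rw [show ((K3 n).induce S).neighborSet v = ∅ from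
      Set.eq_empty_of_forall_notMem fun u => hadj v u, Set.ncard_empty]
    exact Nat.zero_le 3
  · obtain ⟨j, hj⟩ := Set.ncard_eq_one.1 hp
    have hw : (⟨p, j⟩ : Σ _ : Fin 3, Fin n) ∈ S := show j ∈ Sigma.mk p ⁻¹' S from hj ▸ rfl
    have hcenter : ∀ u ∈ S, u.1 = p → u = ⟨p, j⟩ := by
      rintro ⟨s, i⟩ hu rfl
      have : i ∈ ({j} : Set (Fin n)) := hj ▸ hu
      rw [Set.mem_singleton_iff.1 this]
    have hpq : ∀ u ∈ S, u.1 = p ∨ u.1 = q := fun u hu => by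
      by_contra! h
      exact partSize_ne_zero hu (hpq _ h.1 h.2)
    refine ⟨isAcyclic_of_forall_adj_eq_or_eq _ ⟨_, hw⟩ ?_, fun v => ?_⟩
    · rintro ⟨u, hu⟩ ⟨v, hv⟩ (h : u.1 ≠ v.1)
      rcases hpq u hu with hup | huq
      · exact Or.inl (Subtype.ext (hcenter u hu hup))
      rcases hpq v hv with hvp | hvq
      · exact Or.inr (Subtype.ext (hcenter v hv hvp))
      · exact absurd (huq.trans hvq.symm) h
    · have := Set.ncard_lt_card (((K3 n).induce S).neighborSet_ne_univ v)
      rw [Nat.card_coe_set_eq, Set.ncard_eq_sum_ncard_preimage_sigmaMk] at this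
      unfold partSize at hsize
      omega

theorem eqTreeColorable_K3_of_profiles {n t : ℕ} (L : Fin t → Fin 3 → ℕ)
    (hsum : ∑ i, L i = fun _ => n) (hbal : ∀ i j, ∑ p, L i p ≤ ∑ p, L j p + 1)
    (htree : ∀ i, IsTreeProfile (L i)) : EqTreeColorable (K3 n) t 3 := by
  -- part `p` is cut into consecutive blocks, the `i`-th of size `L i p`
  let e (p : Fin 3) : Fin n ≃ Σ i : Fin t, Fin (L i p) :=
    (finCongr (by rw [← Finset.sum_apply, hsum])).trans finSigmaFinEquiv.symm
  let f (v : Σ _ : Fin 3, Fin n) : Fin t := (e v.1 v.2).1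
  have hpart : ∀ i, partSize {v | f v = i} = L i := fun i => funext fun p => by
    rw [partSize, show Sigma.mk p ⁻¹' {v | f v = i} = e p ⁻¹' {x | x.1 = i} from rfl,
      Set.ncard_preimage_of_injective_subset_range (e p).injective (by simp),
      Sigma.ncard_setOf_fst_eq, Nat.card_eq_fintype_card, Fintype.card_fin]
  have hclass : ∀ i, {v | f v = i}.ncard = ∑ p, L i p := fun i => by
    rw [Set.ncard_eq_sum_ncard_preimage_sigmaMk, ← hpart i]
    rfl
  refine ⟨f, fun i j => ?_, fun i => ?_, fun i => ?_⟩
  · rw [hclass, hclass]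
    exact hbal i j
  · exact (hpart i ▸ htree i).induce_K3.1
  · exact (hpart i ▸ htree i).induce_K3.2

theorem eqTreeColorable_K3_of_multiset {n t : ℕ} (M : Multiset (Fin 3 → ℕ))
    (hcard : Multiset.card M = t) (hsum : M.sum = fun _ => n)
    (hbal : ∀ r ∈ M, ∀ r' ∈ M, ∑ p, r p ≤ ∑ p, r' p + 1)
    (htree : ∀ r ∈ M, IsTreeProfile r) : EqTreeColorable (K3 n) t 3 := by
  obtain ⟨l, rfl⟩ : ∃ l : List (Fin 3 → ℕ), (l : Multiset _) = M := Quotient.exists_rep M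
  rw [Multiset.coe_card] at hcard
  subst hcard
  exact eqTreeColorable_K3_of_profiles (fun i => l[i.1]) (by simpa using hsum)
    (fun i j => hbal _ (List.getElem_mem _) _ (List.getElem_mem _))
    (fun i => htree _ (List.getElem_mem _))

def partClasses (p : Fin 3) (c a n : ℕ) : Multiset (Fin 3 → ℕ) :=
  Multiset.replicate (n - c * a) (Pi.single p (a + 1)) +
    Multiset.replicate (c - (n - c * a)) (Pi.single p a)

section partClasses

variable {p : Fin 3} {c a n : ℕ}

theorem card_partClasses (h : n ≤ c * a + c) : Multiset.card (partClasses p c a n) = c := by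
  simp only [partClasses, Multiset.card_add, Multiset.card_replicate]
  omega

theorem sum_partClasses (h₁ : c * a ≤ n) (h₂ : n ≤ c * a + c) :
    (partClasses p c a n).sum = Pi.single p n := by
  obtain ⟨x, rfl⟩ := Nat.exists_eq_add_of_le h₁
  obtain ⟨y, rfl⟩ := Nat.exists_eq_add_of_le (show x ≤ c by omega)
  simp only [partClasses, Multiset.sum_add, Multiset.sum_replicate, Nat.add_sub_cancel_left,
    ← Pi.single_smul, smul_eq_mul, ← Pi.single_add]
  congr 1
  ring

theorem eq_single_of_mem_partClasses {r : Fin 3 → ℕ} (hr : r ∈ partClasses p c a n) :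
    r = Pi.single p a ∨ r = Pi.single p (a + 1) := by
  rcases Multiset.mem_add.1 hr with h | h
  · exact Or.inr (Multiset.eq_of_mem_replicate h)
  · exact Or.inl (Multiset.eq_of_mem_replicate h)

end partClasses

/-- `S` lists the classes meeting several parts; the rest of part `p` is split into `c p`
independent classes of sizes `a` and `a + 1`. -/
theorem eqTreeColorable_K3_of_stars {n t a : ℕ} (S : Multiset (Fin 3 → ℕ)) (c : Fin 3 → ℕ)
    (hS : ∀ r ∈ S, IsTreeProfile r ∧ (∑ p, r p = a ∨ ∑ p, r p = a + 1))
    (hc : ∀ p, c p * a + S.sum p ≤ n ∧ n ≤ c p * a + c p + S.sum p)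
    (ht : c 0 + c 1 + c 2 + Multiset.card S = t) : EqTreeColorable (K3 n) t 3 := by
  let M := S + ∑ p, partClasses p (c p) a (n - S.sum p)
  have hM : ∀ r ∈ M, IsTreeProfile r ∧ (∑ p, r p = a ∨ ∑ p, r p = a + 1) := by
    intro r hr
    rcases Multiset.mem_add.1 hr with hr | hr
    · exact hS r hr
    obtain ⟨p, -, hr⟩ := Multiset.mem_sum.1 hr
    rcases eq_single_of_mem_partClasses hr with rfl | rfl <;>
      simp [isTreeProfile_single, Finset.sum_pi_single']
  refine eqTreeColorable_K3_of_multiset M ?_ ?_ ?_ fun r hr => (hM r hr).1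
  · simp only [M, Multiset.card_add, Fin.sum_univ_three]
    rw [card_partClasses, card_partClasses, card_partClasses] <;> grind
  · ext q
    simp only [M, Multiset.sum_add]
    rw [Multiset.sum_sum, Finset.sum_congr rfl fun p _ => sum_partClasses (by grind) (by grind)]
    simp only [Pi.add_apply, Finset.sum_apply, Pi.single_apply, Finset.sum_ite_eq,
      Finset.mem_univ, if_true]
    grind
  · intro r hr r' hr'
    rcases (hM r hr).2 with h | h <;> rcases (hM r' hr').2 with h' | h' <;> omega

theorem eqTreeColorable_K3_of_uniform {n t a : ℕ} (h₁ : (t + 2) / 3 * a ≤ n)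
    (h₂ : n ≤ t / 3 * (a + 1)) : EqTreeColorable (K3 n) t 3 := by
  refine eqTreeColorable_K3_of_stars (a := a) 0 ![t / 3, (t + 1) / 3, (t + 2) / 3] (by simp)
    (fun p => ?_) (by simp; omega)
  have hc : t / 3 ≤ ![t / 3, (t + 1) / 3, (t + 2) / 3] p ∧
      ![t / 3, (t + 1) / 3, (t + 2) / 3] p ≤ (t + 2) / 3 := by
    fin_cases p <;> simp <;> omega
  have := Nat.mul_le_mul_right a hc.2
  have := Nat.mul_le_mul_right (a + 1) hc.1
  simp only [Multiset.sum_zero, Pi.zero_apply, add_zero]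
  constructor <;> nlinarith

theorem eqTreeColorable_K3_twenty_mul_add_ten {m t : ℕ} (ht : 10 * m + 6 ≤ t)
    (h3 : t = 10 * m + 6 → 3 ∣ m) : EqTreeColorable (K3 (20 * m + 10)) t 3 := by
  by_cases huni : ∃ a, (t + 2) / 3 * a ≤ 20 * m + 10 ∧ 20 * m + 10 ≤ t / 3 * (a + 1)
  · obtain ⟨a, h₁, h₂⟩ := huni
    exact eqTreeColorable_K3_of_uniform h₁ h₂
  simp only [not_exists, not_and, not_le] at huni
  have := huni 0; have := huni 1; have := huni 2; have := huni 3; have := huni 4; have := huni 5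
  obtain rfl | rfl | ⟨rfl, hm⟩ | ⟨rfl, hm⟩ | ⟨rfl, hm⟩ | ⟨rfl, hm⟩ :
      t = 15 * m + 7 ∨ t = 15 * m + 8 ∨ (t = 20 * m + 9 ∧ m % 3 = 2) ∨
      (t = 20 * m + 10 ∧ m % 3 = 0) ∨ (t = 20 * m + 10 ∧ m % 3 = 2) ∨
      (t = 20 * m + 11 ∧ m % 3 = 0) := by omega
  · exact eqTreeColorable_K3_of_stars (a := 4) (Multiset.replicate 2 ![0, 1, 3])
      ![5 * m + 2, 5 * m + 2, 5 * m + 1] (by decide)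
      (fun p => by fin_cases p <;> simp <;> omega) (by simp; omega)
  · exact eqTreeColorable_K3_of_stars (a := 3) (Multiset.replicate 2 ![0, 1, 3])
      ![5 * m + 3, 5 * m + 2, 5 * m + 1] (by decide)
      (fun p => by fin_cases p <;> simp <;> omega) (by simp; omega)
  · obtain ⟨j, rfl⟩ : ∃ j, m = 3 * j + 2 := ⟨m / 3, by omega⟩
    exact eqTreeColorable_K3_of_stars (a := 3) {![1, 2, 0], ![0, 2, 1]}
      ![20 * j + 16, 20 * j + 15, 20 * j + 16] (by decide)
      (fun p => by fin_cases p <;> simp <;> omega) (by simp; omega)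
  · obtain ⟨j, rfl⟩ : ∃ j, m = 3 * j := ⟨m / 3, by omega⟩
    exact eqTreeColorable_K3_of_stars (a := 3) {![1, 2, 0], ![0, 2, 1]}
      ![20 * j + 3, 20 * j + 2, 20 * j + 3] (by decide)
      (fun p => by fin_cases p <;> simp <;> omega) (by simp; omega)
  · obtain ⟨j, rfl⟩ : ∃ j, m = 3 * j + 2 := ⟨m / 3, by omega⟩
    exact eqTreeColorable_K3_of_stars (a := 3) {![1, 2, 0], ![1, 2, 0], ![0, 1, 2]}
      ![20 * j + 16, 20 * j + 15, 20 * j + 16] (by decide)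
      (fun p => by fin_cases p <;> simp <;> omega) (by simp; omega)
  · obtain ⟨j, rfl⟩ : ∃ j, m = 3 * j := ⟨m / 3, by omega⟩
    exact eqTreeColorable_K3_of_stars (a := 2) {![0, 1, 1]}
      ![20 * j + 4, 20 * j + 3, 20 * j + 3] (by decide)
      (fun p => by fin_cases p <;> simp <;> omega) (by simp; omega)

theorem vaStrong_K3_twenty_mul_add_ten_le {m t : ℕ} (ht : 10 * m + 6 ≤ t)
    (h3 : t = 10 * m + 6 → 3 ∣ m) : vaStrong (K3 (20 * m + 10)) 3 ≤ t :=
  Nat.sInf_le fun _ ht' => eqTreeColorable_K3_twenty_mul_add_ten (by omega) fun _ => h3 (by omega)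

theorem stmt19 (k m : ℕ) (hk : k = 5 * m + 2) :
    (∀ q : ℕ, 1 ≤ q → 2 * q + 1 ≤ m → vaStrong (K3 (4 * k + 2)) 3 ≤ 12 * m - 3 * q + 3) ∧
    (∀ q : ℕ, 2 * q ≤ m → vaStrong (K3 (4 * k + 2)) 3 ≤ 12 * m - 3 * q + 6) := by
  rw [hk, show 4 * (5 * m + 2) + 2 = 20 * m + 10 by ring]
  exact ⟨fun q _ _ => vaStrong_K3_twenty_mul_add_ten_le (by omega) fun _ => ⟨1, by omega⟩,
    fun q _ => vaStrong_K3_twenty_mul_add_ten_le (by omega) fun _ => ⟨q / 2, by omega⟩⟩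
end
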